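/- Every metric space on 3 points embeds isometrically into every 2-dimensional real normed space. That is, if M is a 3-point metric space and X is a real normed space of dimension 2, then there exists f : M → X with ‖f(x) − f(y)‖ = d_M(x,y) for all x,y ∈ M. -/
import Mathlib

open Metric

lemma aux_construct {X : Type*} [NormedAddCommGroup X] [NormedSpace ℝ X]
    (hX : Module.finrank ℝ X = 2) {a b c : ℝ} (hb : 0 ≤ b) (hc : 0 < c)
    (h1 : |b - c| ≤ a) (h2 : a ≤ b + c) :
    ∃ u v : X, ‖u‖ = c ∧ ‖v‖ = b ∧ ‖u - v‖ = a := by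
  have hnt : Nontrivial X := Module.nontrivial_of_finrank_pos (R := ℝ) (by omega)
  have hrank2 : Module.rank ℝ X = 2 :=
    (Module.rank_eq_ofNat_iff_finrank_eq_ofNat 2).2 hX
  have hrank : 1 < Module.rank ℝ X := by rw [hrank2]; norm_num
  obtain ⟨u, hu⟩ := exists_norm_eq X hc.le
  have hconn : IsConnected (sphere (0 : X) b) := isConnected_sphere hrank 0 hb
  have hcont : ContinuousOn (fun v : X => ‖u - v‖) (sphere (0 : X) b) :=
    (continuous_const.sub continuous_id).norm.continuousOn
  have hnp : ‖(b / c) • u‖ = b := by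
    rw [norm_smul, hu, Real.norm_eq_abs, abs_div, abs_of_nonneg hb, abs_of_pos hc,
      div_mul_cancel₀ _ hc.ne']
  have hnm : ‖(-(b / c)) • u‖ = b := by
    rw [norm_smul, hu, Real.norm_eq_abs, abs_neg, abs_div, abs_of_nonneg hb, abs_of_pos hc,
      div_mul_cancel₀ _ hc.ne']
  have hmemp : (b / c) • u ∈ sphere (0 : X) b := mem_sphere_zero_iff_norm.2 hnp
  have hmemm : (-(b / c)) • u ∈ sphere (0 : X) b := mem_sphere_zero_iff_norm.2 hnm
  have hvp : ‖u - (b / c) • u‖ = |b - c| := by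
    calc ‖u - (b / c) • u‖ = ‖(1 - b / c) • u‖ := by rw [sub_smul, one_smul]
      _ = |1 - b / c| * c := by rw [norm_smul, hu, Real.norm_eq_abs]
      _ = |(1 - b / c) * c| := by rw [abs_mul, abs_of_pos hc]
      _ = |c - b| := by rw [sub_mul, one_mul, div_mul_cancel₀ _ hc.ne']
      _ = |b - c| := abs_sub_comm _ _
  have hvm : ‖u - (-(b / c)) • u‖ = b + c := by
    calc ‖u - (-(b / c)) • u‖ = ‖(1 + b / c) • u‖ := by
          rw [add_smul, one_smul, neg_smul, sub_neg_eq_add]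
      _ = |1 + b / c| * c := by rw [norm_smul, hu, Real.norm_eq_abs]
      _ = (1 + b / c) * c := by rw [abs_of_nonneg (by positivity)]
      _ = b + c := by rw [add_mul, one_mul, div_mul_cancel₀ _ hc.ne', add_comm]
  have key := hconn.isPreconnected.intermediate_value hmemp hmemm hcont
  have ha : a ∈ Set.Icc (‖u - (b / c) • u‖) (‖u - (-(b / c)) • u‖) := by
    rw [hvp, hvm]; exact ⟨h1, h2⟩
  obtain ⟨v, hv, hva⟩ := key ha
  exact ⟨u, v, hu, mem_sphere_zero_iff_norm.1 hv, hva⟩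

theorem stmt18 {M : Type*} [MetricSpace M] [Fintype M] (hM : Fintype.card M = 3)
    {X : Type*} [NormedAddCommGroup X] [NormedSpace ℝ X]
    (hX : Module.finrank ℝ X = 2) :
    ∃ f : M → X, ∀ x y : M, ‖f x - f y‖ = dist x y := by
  obtain ⟨e⟩ : Nonempty (M ≃ Fin 3) := ⟨Fintype.equivFinOfCardEq hM⟩
  have hc : 0 < dist (e.symm 0) (e.symm 1) :=
    dist_pos.2 (fun h => by simpa using e.symm.injective h)
  have h1 : |dist (e.symm 0) (e.symm 2) - dist (e.symm 0) (e.symm 1)| ≤ dist (e.symm 1) (e.symm 2) := by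
    rw [abs_sub_le_iff]
    constructor
    · have := dist_triangle (e.symm (0:Fin 3)) (e.symm 1) (e.symm 2)
      linarith
    · have := dist_triangle (e.symm (0:Fin 3)) (e.symm 2) (e.symm 1)
      rw [dist_comm (e.symm (2:Fin 3)) (e.symm 1)] at this
      linarith
  have h2 : dist (e.symm 1) (e.symm 2) ≤ dist (e.symm 0) (e.symm 2) + dist (e.symm 0) (e.symm 1) := by
    have := dist_triangle (e.symm (1:Fin 3)) (e.symm 0) (e.symm 2)
    rw [dist_comm (e.symm (1:Fin 3)) (e.symm 0)] at this
    linarith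
  obtain ⟨u, v, hu, hv, huv⟩ := aux_construct hX dist_nonneg hc h1 h2
  refine ⟨fun x => ![0, u, v] (e x), fun x y => ?_⟩
  obtain ⟨i, rfl⟩ : ∃ i, x = e.symm i := ⟨e x, (e.symm_apply_apply x).symm⟩
  obtain ⟨j, rfl⟩ : ∃ j, y = e.symm j := ⟨e y, (e.symm_apply_apply y).symm⟩
  simp only [Equiv.apply_symm_apply]
  fin_cases i <;> fin_cases j <;>
    simp [dist_comm, norm_sub_rev, hu, hv, huv] <;> exact dist_comm _ _
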